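/- For every x ∈ (−1,1) and every t with cos(t/2) ≠ 0, the generalised shift operator applied to the constant function 1 equals 1, i.e. (1/(π (1−x²) cos⁴(t/2))) ∫₀^π B_{cos t}(x, cos φ, R) dφ = 1, where R = x cos t − √(1−x²) sin t cos φ. -/

import Mathlib

open MeasureTheory Real ENNReal

noncomputable section

/-- Weighted `L^p` norm `‖f(x)(1-x²)^α‖_{L^p(-1,1)}` (ess-sup when `p = ∞`). -/
def wNorm (p : ℝ≥0∞) (α : ℝ) (f : ℝ → ℝ) : ℝ≥0∞ :=
  eLpNorm (fun x => f x * (1 - x ^ 2) ^ α) p (volume.restrict (Set.Icc (-1 : ℝ) 1))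

/-- Membership in the weighted space `L_{p,α}`. -/
def MemLpw (p : ℝ≥0∞) (α : ℝ) (f : ℝ → ℝ) : Prop :=
  AEMeasurable f (volume.restrict (Set.Icc (-1 : ℝ) 1)) ∧ wNorm p α f < ⊤

/-- Best approximation of `f` by algebraic polynomials of degree at most `n - 1`. -/
def bestApprox (p : ℝ≥0∞) (α : ℝ) (n : ℕ) (f : ℝ → ℝ) : ℝ≥0∞ :=
  ⨅ P : {P : Polynomial ℝ // P.degree < (n : WithBot ℕ)},
    wNorm p α fun x => f x - (P : Polynomial ℝ).eval x

/-- `R = x cos t − √(1−x²) sin t cos φ`. -/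
def Rpt (x t φ : ℝ) : ℝ := x * Real.cos t - Real.sqrt (1 - x ^ 2) * Real.sin t * Real.cos φ

/-- The kernel `B_y(x, z, R)`. -/
def Bker (y x z R : ℝ) : ℝ :=
  2 * (Real.sqrt (1 - x ^ 2) * y + x * z * Real.sqrt (1 - y ^ 2) +
        Real.sqrt (1 - x ^ 2) * (1 - y) * (1 - z ^ 2)) ^ 2 - (1 - R ^ 2)

/-- The generalised shift operator `τ̂_t(f, x)`. -/
def shiftOp (t : ℝ) (f : ℝ → ℝ) (x : ℝ) : ℝ :=
  (1 / (π * (1 - x ^ 2) * Real.cos (t / 2) ^ 4)) *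
    ∫ φ in (0 : ℝ)..π, Bker (Real.cos t) x (Real.cos φ) (Rpt x t φ) * f (Rpt x t φ)

/-- The `r`-th generalised difference `Δ^r_{t₁,…,t_r}(f, x)`. -/
def gDiff (f : ℝ → ℝ) : (r : ℕ) → (Fin r → ℝ) → ℝ → ℝ
  | 0, _, x => f x
  | r + 1, t, x =>
      shiftOp (t (Fin.last r)) (gDiff f r fun i => t i.castSucc) x -
        gDiff f r (fun i => t i.castSucc) x

/-- The `r`-th generalised modulus of smoothness `ω_r(f, δ)_{p,α}`. -/
def modulus (p : ℝ≥0∞) (α : ℝ) (r : ℕ) (f : ℝ → ℝ) (δ : ℝ) : ℝ≥0∞ :=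
  ⨆ t : {t : Fin r → ℝ // ∀ j, |t j| ≤ δ}, wNorm p α (gDiff f r t.1)

/-- The restrictions on `p` and `α` (with separate case `p = 1`). -/
def alphaCond (p : ℝ≥0∞) (α : ℝ) : Prop :=
  (p = 1 ∧ 1 / 2 < α ∧ α ≤ 1) ∨
    (1 < p ∧ p < ⊤ ∧ 1 - 1 / (2 * p.toReal) < α ∧ α < 3 / 2 - 1 / (2 * p.toReal)) ∨
      (p = ⊤ ∧ 1 ≤ α ∧ α < 3 / 2)

/-- The restrictions on `p` and `α` (uniform for `1 ≤ p < ∞`). -/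
def alphaCond' (p : ℝ≥0∞) (α : ℝ) : Prop :=
  (p < ⊤ ∧ 1 - 1 / (2 * p.toReal) < α ∧ α < 3 / 2 - 1 / (2 * p.toReal)) ∨
    (p = ⊤ ∧ 1 ≤ α ∧ α < 3 / 2)

/-! Along `φ ↦ R`, the kernel is a quartic polynomial in `cos φ`. Over `[0, π]` its odd part
integrates to zero and `1, cos², cos⁴` contribute `π, π/2, 3π/8`; with `1 + cos t = 2 cos² (t/2)`
the integral collapses to exactly the normalising constant `π (1 - x²) cos⁴ (t/2)`. -/

theorem integral_cos_pow_four : ∫ φ in (0 : ℝ)..π, cos φ ^ 4 = 3 * π / 8 := by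
  rw [integral_cos_pow (n := 2), integral_cos_sq]
  simp only [sin_pi, sin_zero, mul_zero, sub_self, zero_div, zero_add, sub_zero, Nat.cast_ofNat]
  ring

theorem integral_quartic_cos (c₀ c₁ c₂ c₃ c₄ : ℝ) :
    ∫ φ in (0 : ℝ)..π,
        c₀ + c₁ * cos φ + c₂ * cos φ ^ 2 + c₃ * cos φ ^ 3 + c₄ * cos φ ^ 4 =
      π * (c₀ + c₂ / 2 + 3 * c₄ / 8) := by
  have hint {f : ℝ → ℝ} (hf : Continuous f) : IntervalIntegrable f volume 0 π :=
    hf.intervalIntegrable 0 π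
  rw [intervalIntegral.integral_add (hint (by fun_prop)) (hint (by fun_prop)),
    intervalIntegral.integral_add (hint (by fun_prop)) (hint (by fun_prop)),
    intervalIntegral.integral_add (hint (by fun_prop)) (hint (by fun_prop)),
    intervalIntegral.integral_add (hint (by fun_prop)) (hint (by fun_prop))]
  simp only [intervalIntegral.integral_const, intervalIntegral.integral_const_mul, integral_cos,
    integral_cos_sq, integral_cos_pow_three, integral_cos_pow_four]
  simp only [smul_eq_mul, sin_pi, sin_zero, cos_pi, cos_zero, sub_zero, sub_self, mul_zero, zero_div]
  ring

theorem integral_Bker_Rpt (x t : ℝ) (hx : x ^ 2 ≤ 1) :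
    ∫ φ in (0 : ℝ)..π, Bker (cos t) x (cos φ) (Rpt x t φ) =
      π * (1 - x ^ 2) * cos (t / 2) ^ 4 := by
  set u := √(1 - x ^ 2)
  set b := √(1 - cos t ^ 2)
  have hu : u ^ 2 = 1 - x ^ 2 := sq_sqrt (by linarith)
  have hb : b ^ 2 = sin t ^ 2 := by
    rw [sq_sqrt (by nlinarith [cos_sq_le_one t]), sin_sq]
  have expand : ∀ φ, Bker (cos t) x (cos φ) (Rpt x t φ) =
      (2 * u ^ 2 + x ^ 2 * cos t ^ 2 - 1)
        + (4 * u * x * b - 2 * x * cos t * u * sin t) * cos φ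
        + (2 * x ^ 2 * b ^ 2 - 4 * u ^ 2 * (1 - cos t) + u ^ 2 * sin t ^ 2) * cos φ ^ 2
        + (-4 * x * b * u * (1 - cos t)) * cos φ ^ 3
        + 2 * u ^ 2 * (1 - cos t) ^ 2 * cos φ ^ 4 := by
    intro φ
    simp only [Bker, Rpt]
    ring
  have hcos : cos t = 2 * cos (t / 2) ^ 2 - 1 := by
    rw [cos_sq, show 2 * (t / 2) = t by ring]
    ring
  simp_rw [expand, integral_quartic_cos, hb, hu, sin_sq, hcos]
  ring

/-- The generalised shift operator preserves the constant function `1`. -/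
theorem shiftOp_const_one (x : ℝ) (hx : x ∈ Set.Ioo (-1 : ℝ) 1) (t : ℝ)
    (ht : Real.cos (t / 2) ≠ 0) :
    (1 / (π * (1 - x ^ 2) * Real.cos (t / 2) ^ 4)) *
      ∫ φ in (0 : ℝ)..π, Bker (Real.cos t) x (Real.cos φ) (Rpt x t φ) = 1 := by
  have hx2 : 0 < 1 - x ^ 2 := by nlinarith [hx.1, hx.2]
  rw [integral_Bker_Rpt x t (by linarith)]
  field_simp [pi_ne_zero, hx2.ne']
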